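/- arXiv:0905.4647 — 5 statements merged into one kernel-verified Lean document; each statement's English description precedes it below -/
import Mathlib

section
/- Let A be a finitely generated integral domain over ℂ. Then A admits a nonzero locally nilpotent ℂ-derivation if and only if there exist a nonzero element f ∈ A and a commutative ℂ-algebra B such that the localization A_f = A[1/f] is isomorphic as a ℂ-algebra to the polynomial ring B[X] in one variable over B. -/
/-!
(⇒) A nonzero locally nilpotent derivation `D` has an element `a` with `f := D a ≠ 0` and
`D f = 0`. On `A_f` the extension of `D` is still locally nilpotent and `s = a / f` satisfies
`D s = 1`; integrating polynomials in `s` over the constants `B = ker D` (possible in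
characteristic zero) shows `A_f = B[s]` with `s` transcendental over `B`.

(⇐) Transport `d/dX` to `A_f`. It kills the unit `f`, so `f ^ N • d/dX` is again locally
nilpotent, and for `N` large it maps the finitely many generators of `A`, hence all of `A`,
into `A`.
-/

open Polynomial

namespace Polynomial

theorem derivative_eq_zero_of_isUnit {B : Type*} [CommRing B] [NoZeroDivisors B] {p : B[X]}
    (hp : IsUnit p) : derivative p = 0 := by
  rw [eq_C_of_natDegree_eq_zero (natDegree_eq_zero_of_isUnit hp), derivative_C]

theorem exists_derivative_eq (K : Type*) {B : Type*} [Field K] [CharZero K] [CommRing B]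
    [Algebra K B] (p : B[X]) : ∃ q, derivative q = p := by
  induction p using Polynomial.induction_on' with
  | add p p' hp hp' =>
    obtain ⟨q, rfl⟩ := hp
    obtain ⟨q', rfl⟩ := hp'
    exact ⟨q + q', derivative_add⟩
  | monomial n b =>
    refine ⟨monomial (n + 1) (((n + 1 : ℕ) : K)⁻¹ • b), ?_⟩
    rw [derivative_monomial, Nat.add_sub_cancel, smul_mul_assoc, ← map_natCast (algebraMap K B),
      mul_comm, ← Algebra.smul_def, inv_smul_smul₀ (Nat.cast_ne_zero.2 n.succ_ne_zero)]

end Polynomial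

namespace Derivation

section Basic

variable {R A : Type*} [CommRing R] [CommRing A] [Algebra R A]

def IsLocallyNilpotent (D : Derivation R A A) : Prop :=
  ∀ a, ∃ n : ℕ, (⇑D)^[n] a = 0

def kerSubalgebra_s0 (D : Derivation R A A) : Subalgebra R A where
  carrier := {a | D a = 0}
  mul_mem' {a b} ha hb := by simp_all [leibniz]
  add_mem' {a b} ha hb := by simp_all
  algebraMap_mem' r := D.map_algebraMap r

variable {D : Derivation R A A} {c : A}

theorem iterate_mul_of_map_eq_zero (hc : D c = 0) (n : ℕ) (a : A) :
    (⇑D)^[n] (c * a) = c * (⇑D)^[n] a := by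
  induction n generalizing a with
  | zero => rfl
  | succ n ih => simp [ih, leibniz, hc]

theorem iterate_smul_of_map_eq_zero (hc : D c = 0) (n : ℕ) (a : A) :
    (⇑(c • D))^[n] a = c ^ n * (⇑D)^[n] a := by
  induction n with
  | zero => simp
  | succ n ih =>
    have hcn : D (c ^ n) = 0 := by simp [leibniz_pow, hc]
    rw [Function.iterate_succ_apply', ih, smul_apply, leibniz, hcn, smul_zero, add_zero,
      Function.iterate_succ_apply', smul_eq_mul, smul_eq_mul, pow_succ', mul_assoc]

theorem IsLocallyNilpotent.smul (hD : D.IsLocallyNilpotent) (hc : D c = 0) :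
    (c • D).IsLocallyNilpotent := fun a ↦ by
  obtain ⟨n, hn⟩ := hD a
  exact ⟨n, by rw [iterate_smul_of_map_eq_zero hc, hn, mul_zero]⟩

theorem IsLocallyNilpotent.exists_map_ne_zero_map_map_eq_zero (hD : D.IsLocallyNilpotent)
    (hD0 : D ≠ 0) : ∃ a, D a ≠ 0 ∧ D (D a) = 0 := by
  obtain ⟨a, ha⟩ : ∃ a, D a ≠ 0 := by
    by_contra! h
    exact hD0 (ext h)
  obtain ⟨n, hn⟩ := hD (D a)
  induction n generalizing a with
  | zero => exact absurd hn ha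
  | succ n ih =>
    by_cases hDa : D (D a) = 0
    · exact ⟨a, ha, hDa⟩
    · exact ih (D a) hDa hn

theorem IsLocallyNilpotent.of_semiconj {B : Type*} [CommRing B] [Algebra R B]
    {D' : Derivation R B B} {φ : A →+* B} (hφ : Function.Injective φ)
    (h : Function.Semiconj φ D D') (hD' : D'.IsLocallyNilpotent) :
    D.IsLocallyNilpotent := fun a ↦ by
  obtain ⟨n, hn⟩ := hD' (φ a)
  exact ⟨n, hφ (by rw [(h.iterate_right n) a, hn, map_zero])⟩

theorem map_aeval_of_map_eq_one {s : A} (hs : D s = 1) (p : D.kerSubalgebra_s0[X]) :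
    D (aeval s p) = aeval s (derivative p) := by
  induction p using Polynomial.induction_on' with
  | add p q hp hq => simp [hp, hq]
  | monomial n b =>
    have hb : D b = 0 := b.2
    simp [aeval_monomial, derivative_monomial, leibniz, leibniz_pow, hs, hb]
    ring

end Basic

section Conj

variable {R A P : Type*} [CommRing R] [CommRing A] [CommRing P] [Algebra R A] [Algebra R P]

def conj (e : A ≃ₐ[R] P) (D : Derivation R P P) : Derivation R A A :=
  mk' (e.symm.toLinearMap ∘ₗ D.toLinearMap ∘ₗ e.toLinearMap) fun a b ↦ by simp [leibniz]

@[simp] theorem conj_apply (e : A ≃ₐ[R] P) (D : Derivation R P P) (a : A) :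
    conj e D a = e.symm (D (e a)) := rfl

theorem IsLocallyNilpotent.restrictScalars {S : Type*} [CommRing S] [Algebra S A]
    [LinearMap.CompatibleSMul A A R S] {D : Derivation S A A} (hD : D.IsLocallyNilpotent) :
    (D.restrictScalars R).IsLocallyNilpotent :=
  hD

theorem IsLocallyNilpotent.conj {D : Derivation R P P} (hD : D.IsLocallyNilpotent)
    (e : A ≃ₐ[R] P) : (conj e D).IsLocallyNilpotent :=
  .of_semiconj (φ := (e : A →+* P)) e.injective (fun a ↦ by simp) hD

end Conj

section Localization

variable {R A S : Type*} [CommRing R] [CommRing A] [CommRing S] [Algebra R S] [Algebra A S]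

open TrivSqZeroExt in
theorem exists_extend_of_isLocalization [Algebra R A] [IsScalarTower R A S] (M : Submonoid A)
    [IsLocalization M S] (d : Derivation R A S) :
    ∃ d' : Derivation R S S, ∀ a, d' (algebraMap A S a) = d a := by
  -- `a ↦ (a, d a)` is an algebra map into the square-zero extension `S ⊕ S`; the second
  -- component of its lift through the localization is the extension of `d`.
  let ψ : A →ₐ[R] TrivSqZeroExt S S :=
    { toFun a := inl (algebraMap A S a) + inr (d a)
      map_one' := by ext <;> simp
      map_mul' a b := by
        ext
        · simp
        · simp only [snd_mul, fst_add, snd_add, fst_inl, snd_inl, fst_inr, snd_inr, d.leibniz,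
            Algebra.smul_def, MulOpposite.smul_eq_mul_unop, MulOpposite.unop_op,
            Algebra.algebraMap_self, RingHom.id_apply]
          ring
      map_zero' := by ext <;> simp
      map_add' a b := by ext <;> simp
      commutes' r := by ext <;> simp [IsScalarTower.algebraMap_apply R A S, algebraMap_eq_inl'] }
  let Ψ : S →ₐ[R] TrivSqZeroExt S S := IsLocalization.liftAlgHom (M := M)
    (f := ψ) fun m ↦ isUnit_iff_isUnit_fst.2 (by simpa [ψ] using IsLocalization.map_units S m)
  have hΨ (a : A) : Ψ (algebraMap A S a) = ψ a := IsLocalization.lift_eq _ a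
  have hfst (z : S) : (Ψ z).fst = z := by
    have : (fstHom S S S).toRingHom.comp Ψ.toRingHom = RingHom.id S :=
      IsLocalization.ringHom_ext M (RingHom.ext fun a ↦ by simp [hΨ, ψ])
    exact RingHom.congr_fun this z
  refine ⟨mk' ((sndHom S S).restrictScalars R ∘ₗ Ψ.toLinearMap) fun y z ↦ ?_,
    fun a ↦ by simp [hΨ, ψ]⟩
  simp only [LinearMap.coe_comp, Function.comp_apply, AlgHom.toLinearMap_apply, map_mul,
    LinearMap.coe_restrictScalars, sndHom_apply, snd_mul, hfst, MulOpposite.smul_eq_mul_unop,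
    smul_eq_mul, MulOpposite.unop_op]
  ring

theorem eq_zero_of_isLocalization {N : Type*} [AddCommGroup N] [Module R N] [Module S N]
    (M : Submonoid A) [IsLocalization M S] {d : Derivation R S N}
    (h : ∀ a, d (algebraMap A S a) = 0) : d = 0 := by
  ext z
  obtain ⟨⟨a, m⟩, hz⟩ := IsLocalization.surj M z
  have := congr_arg d hz
  rw [leibniz, h, h, smul_zero, zero_add] at this
  exact (IsLocalization.map_units S m).smul_eq_zero.1 this

theorem IsLocallyNilpotent.extend [Algebra R A] (M : Submonoid A) [IsLocalization M S]
    {D : Derivation R A A} (hD : D.IsLocallyNilpotent) (hM : ∀ m ∈ M, D m = 0)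
    {D' : Derivation R S S} (hD' : ∀ a, D' (algebraMap A S a) = algebraMap A S (D a)) :
    D'.IsLocallyNilpotent := by
  intro z
  obtain ⟨⟨a, m⟩, hz⟩ := IsLocalization.surj M z
  obtain ⟨n, hn⟩ := hD a
  have hD'm : D' (algebraMap A S m) = 0 := by rw [hD', hM m m.2, map_zero]
  have hsemi : Function.Semiconj (algebraMap A S) D D' := fun a ↦ (hD' a).symm
  refine ⟨n, (IsLocalization.map_units S m).mul_left_eq_zero.1 ?_⟩
  rw [mul_comm, ← iterate_mul_of_map_eq_zero hD'm, mul_comm, hz, ← hsemi.iterate_right n, hn,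
    map_zero]

theorem exists_pow_mul_mem_range [Algebra R A] [IsScalarTower R A S] [Algebra.FiniteType R A]
    (f : A) [IsLocalization.Away f S] (d : Derivation R A S) :
    ∃ N : ℕ, ∀ a, algebraMap A S (f ^ N) * d a ∈ (algebraMap A S).range := by
  classical
  obtain ⟨s, hs⟩ := Algebra.FiniteType.out (R := R) (A := A)
  choose n b hb using fun a : A ↦ IsLocalization.Away.surj f (d a)
  refine ⟨s.sup n, fun a ↦ ?_⟩
  let T : Subalgebra R A :=
    { carrier := {a | algebraMap A S (f ^ s.sup n) * d a ∈ (algebraMap A S).range}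
      mul_mem' := by
        rintro a a' ⟨b, hb⟩ ⟨b', hb'⟩
        refine ⟨a * b' + a' * b, ?_⟩
        simp only [map_add, map_mul, hb, hb', leibniz, Algebra.smul_def]
        ring
      add_mem' := by
        rintro a a' ⟨b, hb⟩ ⟨b', hb'⟩
        exact ⟨b + b', by simp [hb, hb', mul_add]⟩
      algebraMap_mem' r := ⟨0, by simp⟩ }
  have hsT : (s : Set A) ⊆ T := fun x hx ↦ by
    refine ⟨f ^ (s.sup n - n x) * b x, ?_⟩
    rw [map_mul, ← hb, map_pow, map_pow, mul_left_comm, ← pow_add,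
      Nat.sub_add_cancel (Finset.le_sup hx), mul_comm]
  exact Algebra.adjoin_le hsT (hs ▸ Algebra.mem_top)

theorem exists_algebraMap_eq_of_injective [Algebra R A] [IsScalarTower R A S]
    (hφ : Function.Injective (algebraMap A S)) (d : Derivation R A S)
    (hd : ∀ a, d a ∈ (algebraMap A S).range) :
    ∃ D : Derivation R A A, ∀ a, algebraMap A S (D a) = d a := by
  choose g hg using hd
  refine ⟨mk' { toFun := g, map_add' := ?_, map_smul' := ?_ } fun a b ↦ hφ ?_, hg⟩
  · exact fun a b ↦ hφ (by simp [hg])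
  · exact fun r a ↦ hφ (by simp [hg, Algebra.smul_def])
  · simp [hg, leibniz, Algebra.smul_def]

theorem exists_ne_zero_isLocallyNilpotent_of_away [Algebra R A] [IsScalarTower R A S]
    [Algebra.FiniteType R A] {f : A} [IsLocalization.Away f S]
    (hφ : Function.Injective (algebraMap A S)) {D₀ : Derivation R S S} (hD₀ : D₀ ≠ 0)
    (hnil : D₀.IsLocallyNilpotent) (hf : D₀ (algebraMap A S f) = 0) :
    ∃ D : Derivation R A A, D ≠ 0 ∧ D.IsLocallyNilpotent := by
  obtain ⟨N, hN⟩ := exists_pow_mul_mem_range f (D₀.compAlgebraMap A)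
  set c := algebraMap A S (f ^ N)
  have hc : D₀ c = 0 := by simp [c, leibniz_pow, hf]
  obtain ⟨D, hD⟩ := exists_algebraMap_eq_of_injective hφ ((c • D₀).compAlgebraMap A) hN
  refine ⟨D, fun h0 ↦ hD₀ ?_, (hnil.smul hc).of_semiconj hφ fun a ↦ (hD a :)⟩
  have : c • D₀ = 0 :=
    eq_zero_of_isLocalization (.powers f) fun a ↦ by simpa [h0] using (hD a).symm
  exact (IsLocalization.map_units S (⟨f ^ N, N, rfl⟩ : Submonoid.powers f)).smul_eq_zero.1 this

end Localization

section Slice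

variable {K S : Type*} [Field K] [CharZero K] [CommRing S] [Algebra K S] {D : Derivation K S S}
  {s : S}

theorem aeval_injective_of_map_eq_one (hs : D s = 1) :
    Function.Injective (aeval (R := D.kerSubalgebra_s0) s) := by
  have := IsAddTorsionFree.of_isTorsionFree K D.kerSubalgebra_s0
  rw [injective_iff_map_eq_zero]
  suffices ∀ n (p : D.kerSubalgebra_s0[X]), p.natDegree ≤ n → aeval s p = 0 → p = 0 from
    fun p ↦ this _ p le_rfl
  intro n
  induction n with
  | zero =>
    intro p hp h0
    rw [eq_C_of_natDegree_le_zero hp] at h0 ⊢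
    rw [aeval_C] at h0
    exact C_eq_zero.2 (Subtype.ext h0)
  | succ n ih =>
    intro p hp h0
    have hdeg : (derivative p).natDegree ≤ n := by
      have := natDegree_derivative_le p
      omega
    have hp' : derivative p = 0 :=
      ih _ hdeg (by rw [← map_aeval_of_map_eq_one hs, h0, map_zero])
    exact ih p (by rw [derivative_eq_zero.1 hp']; exact Nat.zero_le n) h0

theorem aeval_surjective_of_map_eq_one (hD : D.IsLocallyNilpotent) (hs : D s = 1) :
    Function.Surjective (aeval (R := D.kerSubalgebra_s0) s) := by
  suffices ∀ n z, (⇑D)^[n] z = 0 → z ∈ Set.range (aeval (R := D.kerSubalgebra_s0) s) from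
    fun z ↦ (hD z).elim fun n hn ↦ this n z hn
  intro n
  induction n with
  | zero => rintro z rfl; exact ⟨0, map_zero _⟩
  | succ n ih =>
    intro z hz
    obtain ⟨p, hp⟩ := ih (D z) hz
    obtain ⟨q, rfl⟩ := exists_derivative_eq K p
    have hc : D (z - aeval s q) = 0 := by
      rw [Derivation.map_sub, map_aeval_of_map_eq_one hs, hp, sub_self]
    exact ⟨q + C ⟨_, hc⟩, by simp⟩

noncomputable def sliceEquiv (hD : D.IsLocallyNilpotent) (hs : D s = 1) :
    D.kerSubalgebra_s0[X] ≃ₐ[K] S :=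
  AlgEquiv.ofBijective ((aeval s).restrictScalars K)
    ⟨aeval_injective_of_map_eq_one hs, aeval_surjective_of_map_eq_one hD hs⟩

end Slice

theorem isLocallyNilpotent_derivative' (B : Type*) [CommRing B] :
    (derivative' : Derivation B B[X] B[X]).IsLocallyNilpotent :=
  fun p ↦ ⟨p.natDegree + 1, iterate_derivative_eq_zero p.natDegree.lt_succ_self⟩

theorem exists_ne_zero_isLocallyNilpotent_of_algEquiv_polynomial {R A B : Type*} [CommRing R]
    [CommRing A] [IsDomain A] [Algebra R A] [Algebra.FiniteType R A] [CommRing B] [Algebra R B]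
    {f : A} (hf : f ≠ 0) (e : Localization.Away f ≃ₐ[R] B[X]) :
    ∃ D : Derivation R A A, D ≠ 0 ∧ D.IsLocallyNilpotent := by
  have hM := powers_le_nonZeroDivisors_of_noZeroDivisors hf
  have := IsLocalization.isDomain_localization hM
  have : NoZeroDivisors B :=
    noZeroDivisors_iff.1 (e.symm.toMulEquiv.noZeroDivisors (Localization.Away f))
  let D₀ := conj e (derivative'.restrictScalars R)
  refine exists_ne_zero_isLocallyNilpotent_of_away (f := f) (IsLocalization.injective _ hM)
    (D₀ := D₀) (fun h ↦ one_ne_zero (α := Localization.Away f) ?_)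
    ((isLocallyNilpotent_derivative' B).restrictScalars.conj e) ?_
  · simpa [D₀] using congr($h (e.symm X))
  · simp [D₀, derivative_eq_zero_of_isUnit ((IsLocalization.Away.algebraMap_isUnit f).map e)]

theorem IsLocallyNilpotent.exists_away_algEquiv_polynomial {K A : Type*} [Field K] [CharZero K]
    [CommRing A] [Algebra K A] {D : Derivation K A A} (hD : D.IsLocallyNilpotent) (hD0 : D ≠ 0) :
    ∃ f : A, f ≠ 0 ∧ ∃ B : Subalgebra K (Localization.Away f),
      Nonempty (Localization.Away f ≃ₐ[K] B[X]) := by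
  obtain ⟨a, ha, hf⟩ := hD.exists_map_ne_zero_map_map_eq_zero hD0
  set f := D a
  let φ := algebraMap A (Localization.Away f)
  obtain ⟨D', hD'⟩ := exists_extend_of_isLocalization (.powers f)
    ((Algebra.linearMap A (Localization.Away f)).compDer D)
  have hD'φ (x : A) : D' (φ x) = φ (D x) := hD' x
  have hD'nil : D'.IsLocallyNilpotent :=
    hD.extend (.powers f) (by rintro _ ⟨k, rfl⟩; simp [leibniz_pow, hf]) hD'φ
  have hinv : D' (IsLocalization.Away.invSelf f) = 0 := by
    rw [D'.leibniz_of_mul_eq_one (mul_comm (φ f) _ ▸ IsLocalization.Away.mul_invSelf f), hD'φ,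
      hf, map_zero, smul_zero]
  have hs : D' (φ a * IsLocalization.Away.invSelf f) = 1 := by
    rw [leibniz, hinv, smul_zero, zero_add, smul_eq_mul, hD'φ, mul_comm,
      IsLocalization.Away.mul_invSelf]
  exact ⟨f, ha, D'.kerSubalgebra_s0, ⟨(sliceEquiv hD'nil hs).symm⟩⟩

end Derivation

/-- Proposition 3.5. Let `A` be a finitely generated integral domain over
`ℂ`. Then `A` admits a nonzero locally nilpotent ℂ-derivation if and only if there exist a
nonzero element `f ∈ A` and a commutative ℂ-algebra `B` such that the localization
`A_f = A[1/f]` is isomorphic as a ℂ-algebra to the polynomial ring `B[X]` in one variable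
over `B` (i.e. `Spec A` contains a dense principal open subset which is a cylinder). -/
theorem exists_locallyNilpotentDerivation_iff_cylindrical
    (A : Type) [CommRing A] [IsDomain A] [Algebra ℂ A] [Algebra.FiniteType ℂ A] :
    (∃ D : Derivation ℂ A A, D ≠ 0 ∧ ∀ a : A, ∃ n : ℕ, (⇑D)^[n] a = 0) ↔
      ∃ f : A, f ≠ 0 ∧ ∃ (B : Type) (_ : CommRing B) (_ : Algebra ℂ B),
        Nonempty (Localization.Away f ≃ₐ[ℂ] Polynomial B) := by
  constructor
  · rintro ⟨D, hD0, hD⟩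
    obtain ⟨f, hf, B, e⟩ := Derivation.IsLocallyNilpotent.exists_away_algEquiv_polynomial hD hD0
    exact ⟨f, hf, B, inferInstance, inferInstance, e⟩
  · rintro ⟨f, hf, B, _, _, ⟨e⟩⟩
    exact Derivation.exists_ne_zero_isLocallyNilpotent_of_algEquiv_polynomial hf e
end

section
/- Let A be an integral domain that is a commutative ℂ-algebra, let ∂ be a nonzero locally nilpotent ℂ-derivation of A, and set B = ker ∂. Then there exist g, h ∈ A with ∂g = h, ∂h = 0 and h ≠ 0, such that the ℂ-algebra homomorphism Φ : B_h[X] → A_h from the polynomial ring in one variable over the localization B_h to the localization A_h, which extends the canonical map B_h → A_h and sends X to g/h, is an isomorphism; moreover, under Φ the canonical extension of ∂ to A_h corresponds to the derivation d/dX of B_h[X]. -/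
open Polynomial

/-!
Pick `a` with `∂a ≠ 0` and the last nonzero iterate `∂(∂ᵐa)`; then `g = ∂ᵐa` and `h = ∂g` satisfy
`∂h = 0 ≠ h`. Since `A_h` is formally étale over `A`, `∂` extends (through Kähler differentials) to
a derivation `∂'` of `A_h`; it is again locally nilpotent, its kernel is `B_h`, and `s = g/h` is a
slice: `∂'s = 1`. For a locally nilpotent derivation with a slice in characteristic zero,
`p ↦ p(s)` from polynomials over the kernel is bijective and turns `d/dX` into `∂'`: it is
injective because `∂'(p(s)) = p'(s)` lowers the degree, and surjective by induction on the
nilpotency order of `x`, subtracting `c sⁿ / n!` with `c = ∂'ⁿx` in the kernel.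
-/

def Derivation.kerSubalgebra {A : Type} [CommRing A] [Algebra ℂ A]
    (D : Derivation ℂ A A) : Subalgebra ℂ A where
  carrier := {a | D a = 0}
  mul_mem' := by
    intro a b ha hb
    simp only [Set.mem_setOf_eq] at *
    rw [D.leibniz, ha, hb, smul_zero, smul_zero, add_zero]
  one_mem' := by
    simp only [Set.mem_setOf_eq, Derivation.map_one_eq_zero]
  add_mem' := by
    intro a b ha hb
    simp only [Set.mem_setOf_eq] at *
    rw [map_add, ha, hb, add_zero]
  zero_mem' := by simp only [Set.mem_setOf_eq, map_zero]
  algebraMap_mem' := by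
    intro r
    simp only [Set.mem_setOf_eq, Derivation.map_algebraMap]

namespace Derivation

theorem iterate_map_mul_of_map_eq_zero {R L : Type*} [CommRing R] [CommRing L] [Algebra R L]
    (δ : Derivation R L L) {b : L} (hb : δ b = 0) (n : ℕ) (x : L) :
    δ^[n] (x * b) = δ^[n] x * b := by
  induction n generalizing x with
  | zero => rfl
  | succ n ih =>
    rw [Function.iterate_succ_apply, Function.iterate_succ_apply, leibniz, hb, smul_zero,
      zero_add, smul_eq_mul, mul_comm, ih]

theorem map_eq_zero_of_mem_powers {R A : Type*} [CommRing R] [CommRing A] [Algebra R A]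
    (D : Derivation R A A) {b m : A} (hb : D b = 0) (hm : m ∈ Submonoid.powers b) : D m = 0 := by
  obtain ⟨k, rfl⟩ := hm
  simp [leibniz_pow, hb]

theorem exists_map_map_eq_zero_and_map_ne_zero {R A : Type*} [CommRing R] [CommRing A]
    [Algebra R A] {D : Derivation R A A} (hD : D ≠ 0) (hLND : ∀ a, ∃ n, D^[n] a = 0) :
    ∃ g, D (D g) = 0 ∧ D g ≠ 0 := by
  obtain ⟨a, ha⟩ : ∃ a, D a ≠ 0 := by
    by_contra! h
    exact hD (ext h)
  have hnil : ∃ n, D^[n + 1] a = 0 := by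
    obtain ⟨n, hn⟩ := hLND a
    exact ⟨n, by rw [Function.iterate_succ_apply', hn, map_zero]⟩
  obtain ⟨n, hn, hn'⟩ := Nat.exists_not_and_succ_of_not_zero_of_exists ha hnil
  refine ⟨D^[n] a, ?_, ?_⟩
  · rwa [← Function.iterate_succ_apply' D, ← Function.iterate_succ_apply' D]
  · rwa [← Function.iterate_succ_apply' D]

section Extension

variable {R A T : Type*} [CommRing R] [CommRing A] [CommRing T] [Algebra R A] [Algebra R T]
  [Algebra A T] [IsScalarTower R A T] [Algebra.FormallyEtale A T]

noncomputable def extendOfFormallyEtale (D : Derivation R A A) : Derivation R T T :=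
  ((TensorProduct.AlgebraTensorModule.rid A T T).toLinearMap ∘ₗ
      D.liftKaehlerDifferential.baseChange T ∘ₗ
      (KaehlerDifferential.tensorKaehlerEquivOfFormallyEtale R A T).symm.toLinearMap).compDer
    (KaehlerDifferential.D R T)

theorem extendOfFormallyEtale_algebraMap (D : Derivation R A A) (a : A) :
    D.extendOfFormallyEtale (algebraMap A T a) = algebraMap A T (D a) := by
  simp [extendOfFormallyEtale,
    KaehlerDifferential.tensorKaehlerEquivOfFormallyEtale_symm_D_algebraMap, Algebra.smul_def]

theorem iterate_extendOfFormallyEtale_mul_algebraMap (D : Derivation R A A) {a b : A}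
    (hb : D b = 0) {z : T} (hz : z * algebraMap A T b = algebraMap A T a) (n : ℕ) :
    (D.extendOfFormallyEtale (T := T))^[n] z * algebraMap A T b =
      algebraMap A T (D^[n] a) := by
  have hsemi : Function.Semiconj (algebraMap A T) D D.extendOfFormallyEtale :=
    fun a ↦ (D.extendOfFormallyEtale_algebraMap a).symm
  rw [← iterate_map_mul_of_map_eq_zero _ (by rw [extendOfFormallyEtale_algebraMap, hb, map_zero]),
    hz, hsemi.iterate_right n a]

theorem extendOfFormallyEtale_mul_algebraMap (D : Derivation R A A) {a b : A}
    (hb : D b = 0) {z : T} (hz : z * algebraMap A T b = algebraMap A T a) :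
    D.extendOfFormallyEtale z * algebraMap A T b = algebraMap A T (D a) :=
  D.iterate_extendOfFormallyEtale_mul_algebraMap hb hz 1

theorem exists_iterate_extendOfFormallyEtale_eq_zero {M : Submonoid A} [IsLocalization M T]
    {D : Derivation R A A} (hM : ∀ m ∈ M, D m = 0) (hLND : ∀ a, ∃ n, D^[n] a = 0) (z : T) :
    ∃ n, (D.extendOfFormallyEtale (T := T))^[n] z = 0 := by
  obtain ⟨⟨a, m⟩, hz⟩ := IsLocalization.surj M z
  obtain ⟨n, hn⟩ := hLND a
  refine ⟨n, (IsLocalization.map_units T m).mul_left_eq_zero.1 ?_⟩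
  rw [iterate_extendOfFormallyEtale_mul_algebraMap D (hM m m.2) hz, hn, map_zero]

end Extension

section Slice

variable {R K L : Type*} [CommRing R] [CommRing K] [CommRing L] [Algebra R K] [Algebra R L]
  {δ : Derivation R L L} {φ : K →ₐ[R] L} {s : L}

theorem map_aevalTower (hφ : ∀ k, δ (φ k) = 0) (hs : δ s = 1) (p : K[X]) :
    δ (aevalTower φ s p) = aevalTower φ s (derivative p) := by
  induction p using Polynomial.induction_on' with
  | add p q hp hq => simp [hp, hq]
  | monomial n k =>
    simp only [aevalTower, eval₂AlgHom_apply, eval₂_monomial, RingHom.coe_coe, leibniz,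
      leibniz_pow, hs, smul_eq_mul, mul_one, nsmul_eq_mul, hφ, mul_zero, add_zero,
      derivative_monomial, map_mul, _root_.map_natCast]
    ring

theorem iterate_map_aevalTower (hφ : ∀ k, δ (φ k) = 0) (hs : δ s = 1) (n : ℕ) (p : K[X]) :
    δ^[n] (aevalTower φ s p) = aevalTower φ s (derivative^[n] p) :=
  (Function.Semiconj.iterate_right (fun p ↦ (map_aevalTower hφ hs p).symm) n p).symm

end Slice

section SliceCharZero

variable {R K L : Type*} [Field R] [CharZero R] [CommRing K] [CommRing L] [Algebra R K]
  [Algebra R L] {δ : Derivation R L L} {φ : K →ₐ[R] L} {s : L}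

theorem aevalTower_injective_of_slice (hinj : Function.Injective φ)
    (hφ : ∀ k, δ (φ k) = 0) (hs : δ s = 1) : Function.Injective (aevalTower φ s) := by
  have := IsAddTorsionFree.of_isTorsionFree R K
  refine (injective_iff_map_eq_zero _).2 fun p hp ↦ ?_
  induction hn : p.natDegree using Nat.strong_induction_on generalizing p with
  | _ n ih =>
    have hderiv : derivative p = 0 := by
      by_contra hne
      have hlt : (derivative p).natDegree < n := by
        have := mt derivative_eq_zero.2 hne
        rw [natDegree_derivative]
        omega
      exact hne (ih _ hlt _ (by rw [← map_aevalTower hφ hs, hp, map_zero]) rfl)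
    rw [eq_C_of_natDegree_eq_zero (derivative_eq_zero.1 hderiv), aevalTower_C] at hp
    rw [eq_C_of_natDegree_eq_zero (derivative_eq_zero.1 hderiv),
      hinj (hp.trans (map_zero φ).symm), map_zero]

theorem aevalTower_surjective_of_slice (hnil : ∀ x, ∃ n, δ^[n] x = 0)
    (hker : ∀ x, δ x = 0 → x ∈ φ.range) (hφ : ∀ k, δ (φ k) = 0) (hs : δ s = 1) :
    Function.Surjective (aevalTower φ s) := by
  intro x
  obtain ⟨n, hn⟩ := hnil x
  induction n generalizing x with
  | zero => exact ⟨0, by simp_all⟩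
  | succ n ih =>
    obtain ⟨k, hk⟩ := hker (δ^[n] x) (by rwa [← Function.iterate_succ_apply' δ])
    set q : K[X] := C ((n.factorial : R)⁻¹ • k) * X ^ n
    have hq : δ^[n] (aevalTower φ s q) = δ^[n] x := by
      rw [iterate_map_aevalTower hφ hs, iterate_derivative_C_mul,
        iterate_derivative_X_pow_eq_natCast_mul, Nat.descFactorial_self, Nat.sub_self, pow_zero,
        mul_one, map_mul, _root_.map_natCast, aevalTower_C, _root_.map_smul, smul_mul_assoc,
        ← nsmul_eq_mul', ← Nat.cast_smul_eq_nsmul R, smul_smul,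
        inv_mul_cancel₀ (Nat.cast_ne_zero.2 n.factorial_ne_zero), one_smul, ← hk]
      rfl
    obtain ⟨p, hp⟩ := ih (x - aevalTower φ s q) (by rw [iterate_map_sub, hq, sub_self])
    exact ⟨p + q, by rw [map_add, hp, sub_add_cancel]⟩

end SliceCharZero

end Derivation

namespace Subalgebra

variable {R A : Type*} [CommRing R] [CommRing A] [Algebra R A] (B : Subalgebra R A) (h : B)

noncomputable def awayMap : Localization.Away h →ₐ[R] Localization.Away (h : A) :=
  Localization.awayMapₐ B.val h

theorem awayMap_algebraMap (b : B) :
    B.awayMap h (algebraMap B _ b) = algebraMap A (Localization.Away (h : A)) b := by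
  change Localization.awayMapₐ B.val h (algebraMap B _ b) = _
  rw [Localization.awayMapₐ, IsLocalization.Away.mapₐ_apply, IsLocalization.Away.map,
    IsLocalization.map_eq]
  rfl

theorem awayMap_injective : Function.Injective (B.awayMap h) :=
  IsLocalization.Away.mapₐ_injective_of_injective (Aₚ := Localization.Away h)
    (Bₚ := Localization.Away (B.val h)) _ Subtype.val_injective

end Subalgebra

theorem Derivation.mem_kerSubalgebra {A : Type} [CommRing A] [Algebra ℂ A]
    {D : Derivation ℂ A A} {a : A} : a ∈ D.kerSubalgebra ↔ D a = 0 :=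
  Iff.rfl

theorem Derivation.extendOfFormallyEtale_eq_zero_iff {A : Type} [CommRing A] [IsDomain A]
    [Algebra ℂ A] {D : Derivation ℂ A A} (h : D.kerSubalgebra) (hne : (h : A) ≠ 0)
    (z : Localization.Away (h : A)) :
    D.extendOfFormallyEtale z = 0 ↔ z ∈ (D.kerSubalgebra.awayMap h).range := by
  set φ := D.kerSubalgebra.awayMap h
  rw [AlgHom.mem_range]
  constructor
  · intro hz
    obtain ⟨⟨a, m⟩, hza⟩ := IsLocalization.surj (Submonoid.powers (h : A)) z
    obtain ⟨k, hk⟩ := m.2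
    have hm : D m = 0 := D.map_eq_zero_of_mem_powers (mem_kerSubalgebra.1 h.2) m.2
    have hDa : D a = 0 := by
      have := D.extendOfFormallyEtale_mul_algebraMap hm hza
      rw [hz, zero_mul, eq_comm] at this
      exact IsLocalization.injective _ (powers_le_nonZeroDivisors_of_noZeroDivisors hne)
        (this.trans (map_zero _).symm)
    let y : Submonoid.powers h := ⟨h ^ k, k, rfl⟩
    refine ⟨IsLocalization.mk' _ (⟨a, mem_kerSubalgebra.2 hDa⟩ : D.kerSubalgebra) y,
      (IsLocalization.map_units _ m).mul_left_inj.1 ?_⟩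
    have hym : φ (algebraMap _ _ (y : D.kerSubalgebra)) = algebraMap A _ m := by
      rw [Subalgebra.awayMap_algebraMap, ← hk]; rfl
    rw [hza, ← hym, ← map_mul, IsLocalization.mk'_spec, Subalgebra.awayMap_algebraMap]
  · rintro ⟨w, rfl⟩
    obtain ⟨⟨b, y⟩, hw⟩ := IsLocalization.surj (Submonoid.powers h) w
    have hy := (IsLocalization.map_units (Localization.Away h) y).map φ
    rw [Subalgebra.awayMap_algebraMap] at hy
    refine hy.mul_left_eq_zero.1 ?_
    have hwφ : φ w * algebraMap A _ (y : D.kerSubalgebra) = algebraMap A _ b := by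
      simpa only [map_mul, φ, Subalgebra.awayMap_algebraMap] using congrArg φ hw
    rw [D.extendOfFormallyEtale_mul_algebraMap y.1.2 hwφ, mem_kerSubalgebra.1 b.2, map_zero]

/-- the slice-theorem step in the proof of Proposition 3.5. Let `A` be an
integral domain over `ℂ`, `∂` a nonzero locally nilpotent ℂ-derivation of `A`, and
`B = ker ∂`. Then there exist `g, h ∈ A` with `∂g = h`, `∂h = 0` and `h ≠ 0`, such that the
ℂ-algebra homomorphism `Φ : B_h[X] → A_h` extending the canonical map `B_h → A_h` and
sending `X` to `g/h` is an isomorphism; moreover, under `Φ` the canonical extension of `∂`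
to `A_h` corresponds to the derivation `d/dX` of `B_h[X]`.

(The isomorphism `Φ` is uniquely determined by the listed compatibilities: a ring
homomorphism from a localization is determined by its restriction to `B`, and an algebra
homomorphism from `B_h[X]` is determined by its values on `B_h` and on `X`; likewise the
extension `D'` of `∂` to `A_h` is uniquely determined by commuting with the localization
map.) -/
theorem slice_theorem_for_locallyNilpotentDerivation
    (A : Type) [CommRing A] [IsDomain A] [Algebra ℂ A]
    (D : Derivation ℂ A A) (hD : D ≠ 0)
    (hLND : ∀ a : A, ∃ n : ℕ, (⇑D)^[n] a = 0) :
    ∃ (g h : A) (_ : D g = h) (hh : D h = 0) (_ : h ≠ 0),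
      ∃ Φ : Polynomial (Localization.Away (⟨h, hh⟩ : D.kerSubalgebra))
              ≃ₐ[ℂ] Localization.Away h,
        (∀ b : D.kerSubalgebra,
            Φ (C (algebraMap (D.kerSubalgebra)
                (Localization.Away (⟨h, hh⟩ : D.kerSubalgebra)) b))
              = algebraMap A (Localization.Away h) (b : A)) ∧
        Φ X = IsLocalization.mk' (Localization.Away h) g
                ⟨h, Submonoid.mem_powers h⟩ ∧
        ∃ D' : Derivation ℂ (Localization.Away h) (Localization.Away h),
          (∀ a : A, D' (algebraMap A (Localization.Away h) a)
              = algebraMap A (Localization.Away h) (D a)) ∧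
          ∀ p : Polynomial (Localization.Away (⟨h, hh⟩ : D.kerSubalgebra)),
            D' (Φ p) = Φ (derivative p) := by
  obtain ⟨g, hh, hne⟩ := D.exists_map_map_eq_zero_and_map_ne_zero hD hLND
  set h : D.kerSubalgebra := ⟨D g, hh⟩
  set D' : Derivation ℂ (Localization.Away (D g)) (Localization.Away (D g)) :=
    D.extendOfFormallyEtale
  set φ := D.kerSubalgebra.awayMap h
  set s := IsLocalization.mk' (Localization.Away (D g)) g ⟨D g, Submonoid.mem_powers (D g)⟩
  have hφ (w) : D' (φ w) = 0 := (D.extendOfFormallyEtale_eq_zero_iff h hne _).2 ⟨w, rfl⟩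
  have hs : D' s = 1 := by
    refine (IsLocalization.map_units _ ⟨D g, Submonoid.mem_powers _⟩).mul_left_inj.1 ?_
    rw [one_mul]
    exact D.extendOfFormallyEtale_mul_algebraMap hh (IsLocalization.mk'_spec _ g _)
  let Φ := AlgEquiv.ofBijective (aevalTower φ s)
    ⟨Derivation.aevalTower_injective_of_slice (D.kerSubalgebra.awayMap_injective h) hφ hs,
      Derivation.aevalTower_surjective_of_slice
        (Derivation.exists_iterate_extendOfFormallyEtale_eq_zero (M := Submonoid.powers (D g))
          (fun _ ↦ D.map_eq_zero_of_mem_powers hh) hLND)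
        (fun z hz ↦ (D.extendOfFormallyEtale_eq_zero_iff h hne z).1 hz) hφ hs⟩
  refine ⟨g, D g, rfl, hh, hne, Φ, fun b ↦ ?_, aevalTower_X _ _, D',
    D.extendOfFormallyEtale_algebraMap, Derivation.map_aevalTower hφ hs⟩
  exact (aevalTower_C _ _ _).trans (D.kerSubalgebra.awayMap_algebraMap h b)
end

section
/- Let A be an integral domain, finitely generated as a ℂ-algebra, which is integrally closed in its field of fractions, and let ∂ be a locally nilpotent ℂ-derivation of A. Then the kernel B = ker ∂ is an integral domain which is integrally closed in its own field of fractions. -/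
/-!
Measure elements of `A` by their `D`-degree, the largest `d` with `D^[d] a ≠ 0`. The iterated
Leibniz rule makes this degree additive on products in a domain of characteristic zero, so if
`D a ≠ 0` then in a monic relation `a ^ n + ∑_{i<n} c_i a ^ i = 0` with `D c_i = 0` the term
`a ^ n` has degree `n d`, strictly larger than that of every other term: this is impossible.
Hence `ker D` is integrally closed in `A`, and therefore integrally closed in its own fraction
field since `A` is.
-/

open Finset

namespace Derivation

section

variable {R A : Type*} [CommSemiring R] [CommSemiring A] [Algebra R A] (D : Derivation R A A)

theorem iterate_apply_mul (n : ℕ) (a b : A) :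
    D^[n] (a * b) = ∑ ij ∈ antidiagonal n, n.choose ij.1 • (D^[ij.1] a * D^[ij.2] b) := by
  induction n with
  | zero => simp
  | succ n ih =>
    rw [sum_antidiagonal_choose_succ_nsmul (fun i j ↦ D^[i] a * D^[j] b) n]
    simp only [Function.iterate_succ_apply', ih, map_sum, map_nsmul, leibniz, smul_eq_mul,
      nsmul_add, sum_add_distrib]
    congr 1
    refine sum_congr rfl fun ⟨i, j⟩ hij ↦ ?_
    rw [n.choose_symm_of_eq_add (mem_antidiagonal.1 hij).symm, mul_comm]

theorem iterate_eq_zero_of_le {x : A} {m n : ℕ} (hx : D^[m] x = 0) (hmn : m ≤ n) :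
    D^[n] x = 0 := by
  obtain ⟨k, rfl⟩ := Nat.exists_eq_add_of_le hmn
  rw [add_comm, Function.iterate_add_apply, hx, iterate_map_zero]

theorem iterate_mul_eq_zero {x y : A} {p q : ℕ} (hx : D^[p + 1] x = 0) (hy : D^[q + 1] y = 0) :
    D^[p + q + 1] (x * y) = 0 := by
  rw [iterate_apply_mul]
  refine sum_eq_zero fun ⟨i, j⟩ hij ↦ ?_
  rw [HasAntidiagonal.mem_antidiagonal] at hij
  rcases le_or_gt (p + 1) i with hi | hi
  · rw [iterate_eq_zero_of_le D hx hi, zero_mul, smul_zero]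
  · rw [iterate_eq_zero_of_le D hy (by omega), mul_zero, smul_zero]

theorem iterate_apply_mul_of_iterate_eq_zero {x y : A} {p q : ℕ} (hx : D^[p + 1] x = 0)
    (hy : D^[q + 1] y = 0) :
    D^[p + q] (x * y) = (p + q).choose p • (D^[p] x * D^[q] y) := by
  rw [iterate_apply_mul, sum_eq_single_of_mem (p, q) (HasAntidiagonal.mem_antidiagonal.2 rfl)]
  rintro ⟨i, j⟩ hij hne
  rw [HasAntidiagonal.mem_antidiagonal] at hij
  rcases le_or_gt (p + 1) i with hi | hi
  · rw [iterate_eq_zero_of_le D hx hi, zero_mul, smul_zero]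
  · rw [iterate_eq_zero_of_le D hy (by grind), mul_zero, smul_zero]

theorem iterate_pow_eq_zero {x : A} {p : ℕ} (hx : D^[p + 1] x = 0) (n : ℕ) :
    D^[n * p + 1] (x ^ n) = 0 := by
  induction n with
  | zero => simp
  | succ n ih => rw [pow_succ, add_one_mul, iterate_mul_eq_zero D ih hx]

theorem iterate_pow_ne_zero [IsDomain A] [CharZero A] {x : A} {p : ℕ} (hx : D^[p + 1] x = 0)
    (hx' : D^[p] x ≠ 0) (n : ℕ) : D^[n * p] (x ^ n) ≠ 0 := by
  induction n with
  | zero => simp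
  | succ n ih =>
    rw [pow_succ, add_one_mul,
      iterate_apply_mul_of_iterate_eq_zero D (iterate_pow_eq_zero D hx n) hx, nsmul_eq_mul]
    exact mul_ne_zero (Nat.cast_ne_zero.2 (Nat.choose_pos (by omega)).ne') (mul_ne_zero ih hx')

theorem exists_pos_iterate_ne_zero_iterate_succ_eq_zero (hD : ∀ a : A, ∃ n : ℕ, D^[n] a = 0)
    {a : A} (ha : D a ≠ 0) : ∃ d, 0 < d ∧ D^[d] a ≠ 0 ∧ D^[d + 1] a = 0 := by
  classical
  have hex : ∃ d, D^[d + 1] a = 0 := by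
    obtain ⟨n, hn⟩ := hD a
    exact ⟨n, iterate_eq_zero_of_le D hn n.le_succ⟩
  obtain ⟨k, hk⟩ : ∃ k, Nat.find hex = k + 1 := Nat.exists_eq_succ_of_ne_zero fun h ↦ ha <| by
    have := Nat.find_spec hex
    rwa [h] at this
  refine ⟨k + 1, k.succ_pos, Nat.find_min hex (by omega), ?_⟩
  rw [← hk]
  exact Nat.find_spec hex

end

section

variable {A : Type} [CommRing A] [IsDomain A] [Algebra ℂ A] (D : Derivation ℂ A A)

theorem apply_eq_zero_of_isIntegral (hD : ∀ a : A, ∃ n : ℕ, D^[n] a = 0) {a : A}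
    (ha : IsIntegral D.kerSubalgebra a) : D a = 0 := by
  have : CharZero A := charZero_of_injective_algebraMap (algebraMap ℂ A).injective
  by_contra hDa
  obtain ⟨d, hd0, hdne, hd⟩ := exists_pos_iterate_ne_zero_iterate_succ_eq_zero D hD hDa
  obtain ⟨p, hmon, hp⟩ := ha
  set n := p.natDegree
  have hn : n ≠ 0 := by
    intro h
    rw [hmon.natDegree_eq_zero.mp h, Polynomial.eval₂_one] at hp
    exact one_ne_zero hp
  have hsum : a ^ n = -∑ i ∈ range n, (p.coeff i : A) * a ^ i := by
    rw [hmon.as_sum] at hp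
    simp only [Polynomial.eval₂_add, Polynomial.eval₂_X_pow, Polynomial.eval₂_finsetSum,
      Polynomial.eval₂_mul, Polynomial.eval₂_C, Subalgebra.algebraMap_apply] at hp
    exact eq_neg_of_add_eq_zero_left hp
  apply iterate_pow_ne_zero D hd hdne n
  rw [hsum, iterate_map_neg, neg_eq_zero]
  refine sum_induction _ (fun x ↦ D^[n * d] x = 0)
    (fun _ _ hx hy ↦ by rw [iterate_map_add, hx, hy, add_zero]) (iterate_map_zero D _)
    fun i hi ↦ ?_
  have hc : D^[0 + 1] (p.coeff i : A) = 0 := (p.coeff i).2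
  refine iterate_eq_zero_of_le D (iterate_mul_eq_zero D hc (iterate_pow_eq_zero D hd i)) ?_
  have := mem_range.1 hi
  nlinarith

theorem isIntegrallyClosedIn_kerSubalgebra (hD : ∀ a : A, ∃ n : ℕ, D^[n] a = 0) :
    IsIntegrallyClosedIn D.kerSubalgebra A :=
  isIntegrallyClosedIn_iff.2
    ⟨Subtype.val_injective, fun ha ↦ ⟨⟨_, apply_eq_zero_of_isIntegral D hD ha⟩, rfl⟩⟩

end

end Derivation

theorem kernel_of_locallyNilpotentDerivation_integrallyClosed_general
    (A : Type) [CommRing A] [IsDomain A] [Algebra ℂ A]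
    [IsIntegrallyClosed A]
    (D : Derivation ℂ A A)
    (hLND : ∀ a : A, ∃ n : ℕ, (⇑D)^[n] a = 0) :
    IsDomain ↥(D.kerSubalgebra) ∧ IsIntegrallyClosed ↥(D.kerSubalgebra) :=
  have := D.isIntegrallyClosedIn_kerSubalgebra hLND
  ⟨inferInstance, .of_isIntegrallyClosed_of_isIntegrallyClosedIn _ A⟩

/-- normality assertion in Theorem 2.16(b). Let `A` be an integral
domain, finitely generated as a ℂ-algebra, which is integrally closed in its field of
fractions, and let `∂` be a locally nilpotent ℂ-derivation of `A`. Then the kernel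
`B = ker ∂` is an integral domain which is integrally closed in its own field of
fractions. -/
theorem kernel_of_locallyNilpotentDerivation_integrallyClosed
    (A : Type) [CommRing A] [IsDomain A] [Algebra ℂ A] [Algebra.FiniteType ℂ A]
    [IsIntegrallyClosed A]
    (D : Derivation ℂ A A)
    (hLND : ∀ a : A, ∃ n : ℕ, (⇑D)^[n] a = 0) :
    IsDomain ↥(D.kerSubalgebra) ∧ IsIntegrallyClosed ↥(D.kerSubalgebra) :=
  kernel_of_locallyNilpotentDerivation_integrallyClosed_general A D hLND
end

section
/- Let A = ⊕_{k≥0} ℂ[x,y,z]_{3k} be the third Veronese subalgebra of the polynomial ring ℂ[x,y,z], i.e. the ℂ-subalgebra consisting of all polynomials each of whose homogeneous components has degree divisible by 3. Then A admits a nonzero locally nilpotent ℂ-derivation (for instance, the derivation z⁴·∂/∂x of ℂ[x,y,z] is locally nilpotent and restricts to a nonzero locally nilpotent derivation of A). -/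
/-!
For `D = ∂/∂x` and `c = z⁴` we have `D c = 0`, so `(c • D)ⁿ = cⁿ • Dⁿ`; since `∂/∂x` lowers the
total degree, `z⁴ ∂/∂x` is locally nilpotent. It sends the monomial `xᵃ yᵇ zᶜ` to a multiple of
`xᵃ⁻¹ yᵇ zᶜ⁺⁴`, raising the degree by 3, so it preserves the Veronese subalgebra, where it is
nonzero since `x³ ↦ 3 x² z⁴`.
-/

open MvPolynomial

/-- The third Veronese subalgebra `A = ⊕_{k≥0} ℂ[x,y,z]_{3k}` of `ℂ[x,y,z]`: the
ℂ-subalgebra consisting of all polynomials each of whose monomials (hence each of whose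
homogeneous components) has total degree divisible by 3.  Here `x = X 0`, `y = X 1`,
`z = X 2` in `MvPolynomial (Fin 3) ℂ`. -/
noncomputable def veronese3 : Subalgebra ℂ (MvPolynomial (Fin 3) ℂ) where
  carrier := {p | ∀ d : Fin 3 →₀ ℕ, coeff d p ≠ 0 → 3 ∣ d.sum fun _ e => e}
  mul_mem' := by
    intro p q hp hq d hd
    rw [coeff_mul] at hd
    obtain ⟨⟨u, v⟩, huv, hne⟩ := Finset.exists_ne_zero_of_sum_ne_zero hd
    rw [Finset.HasAntidiagonal.mem_antidiagonal] at huv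
    have hu : coeff u p ≠ 0 := left_ne_zero_of_mul hne
    have hv : coeff v q ≠ 0 := right_ne_zero_of_mul hne
    have hsum : (u + v).sum (fun _ e => e) = u.sum (fun _ e => e) + v.sum (fun _ e => e) :=
      Finsupp.sum_add_index' (fun _ => rfl) (fun _ _ _ => rfl)
    have := dvd_add (hp u hu) (hq v hv)
    rw [← hsum, huv] at this
    exact this
  one_mem' := by
    intro d hd
    rw [coeff_one] at hd
    by_cases h : (0 : Fin 3 →₀ ℕ) = d
    · subst h; simp
    · simp [h] at hd
  add_mem' := by
    intro p q hp hq d hd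
    rw [coeff_add] at hd
    by_cases h : coeff d p ≠ 0
    · exact hp d h
    · push_neg at h
      rw [h, zero_add] at hd
      exact hq d hd
  zero_mem' := by
    intro d hd
    simp at hd
  algebraMap_mem' := by
    intro r d hd
    rw [algebraMap_eq, coeff_C] at hd
    by_cases h : (0 : Fin 3 →₀ ℕ) = d
    · subst h; simp
    · simp [h] at hd

/-- The derivation `z⁴·∂/∂x` of `ℂ[x,y,z]`. -/
noncomputable def veroneseDer : Derivation ℂ (MvPolynomial (Fin 3) ℂ) (MvPolynomial (Fin 3) ℂ) :=
  ((X 2 : MvPolynomial (Fin 3) ℂ) ^ 4) •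
    (pderiv 0 : Derivation ℂ (MvPolynomial (Fin 3) ℂ) (MvPolynomial (Fin 3) ℂ))

namespace MvPolynomial

variable {σ R : Type*} [CommSemiring R]

theorem totalDegree_pderiv_lt {i : σ} {p : MvPolynomial σ R} (h : pderiv i p ≠ 0) :
    totalDegree (pderiv i p) < totalDegree p := by
  have hlt : ∀ m ∈ (pderiv i p).support, m.degree < totalDegree p := fun m hm => by
    rw [mem_support_iff, coeff_pderiv] at hm
    have := le_totalDegree (mem_support_iff.mpr (left_ne_zero_of_mul hm))
    change (m + Finsupp.single i 1).degree ≤ _ at this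
    simp only [map_add, Finsupp.degree_single] at this
    omega
  obtain ⟨m, hm⟩ := support_nonempty.mpr h
  exact (Finset.sup_lt_iff (lt_of_le_of_lt bot_le (hlt m hm))).mpr hlt

theorem pderiv_iterate_eq_zero_of_totalDegree_lt (i : σ) {n : ℕ} {p : MvPolynomial σ R}
    (h : totalDegree p < n) : (⇑(pderiv i))^[n] p = 0 := by
  induction n generalizing p with
  | zero => exact absurd h (Nat.not_lt_zero _)
  | succ n ih =>
    rw [Function.iterate_succ_apply]
    by_cases h0 : pderiv i p = 0
    · rw [h0, iterate_map_zero]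
    · exact ih (by have := totalDegree_pderiv_lt h0; omega)

end MvPolynomial

namespace Derivation

variable {R A : Type*} [CommSemiring R] [CommSemiring A] [Algebra R A]

theorem smul_iterate_apply (D : Derivation R A A) {c : A} (hc : D c = 0) (n : ℕ) (a : A) :
    (⇑(c • D))^[n] a = c ^ n * (⇑D)^[n] a := by
  induction n with
  | zero => simp
  | succ n ih =>
    rw [Function.iterate_succ_apply', Function.iterate_succ_apply', ih, smul_apply,
      leibniz, leibniz_pow, hc, smul_zero, smul_zero, smul_zero, add_zero, smul_eq_mul,
      smul_eq_mul]
    ring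

def restrict (D : Derivation R A A) (S : Subalgebra R A) (hS : ∀ a ∈ S, D a ∈ S) :
    Derivation R S S where
  toFun a := ⟨D a, hS a a.2⟩
  map_add' a b := Subtype.ext (D.map_add a b)
  map_smul' c a := Subtype.ext (D.map_smul c a)
  map_one_eq_zero' := Subtype.ext D.map_one_eq_zero
  leibniz' a b := Subtype.ext (D.leibniz a b)

variable {D : Derivation R A A} {S : Subalgebra R A} {hS : ∀ a ∈ S, D a ∈ S}

theorem coe_restrict_iterate_apply (n : ℕ) (a : S) :
    ((⇑(D.restrict S hS))^[n] a : A) = (⇑D)^[n] a := by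
  induction n generalizing a with
  | zero => rfl
  | succ n ih => exact ih _

theorem restrict_ne_zero {a : A} (ha : a ∈ S) (hDa : D a ≠ 0) : D.restrict S hS ≠ 0 :=
  fun h => hDa (congrArg Subtype.val (DFunLike.congr_fun h ⟨a, ha⟩) :)

end Derivation

theorem mem_veronese3_iff {p : MvPolynomial (Fin 3) ℂ} :
    p ∈ veronese3 ↔ ∀ d, coeff d p ≠ 0 → 3 ∣ d.degree :=
  Iff.rfl

theorem monomial_mem_veronese3 {s : Fin 3 →₀ ℕ} (hs : 3 ∣ s.degree) (a : ℂ) :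
    monomial s a ∈ veronese3 := by
  refine mem_veronese3_iff.mpr fun d hd => ?_
  rwa [Finset.mem_singleton.mp (support_monomial_subset (mem_support_iff.mpr hd))]

theorem veroneseDer_monomial (s : Fin 3 →₀ ℕ) (a : ℂ) :
    veroneseDer (monomial s a) =
      monomial (s - Finsupp.single 0 1 + Finsupp.single 2 4) (a * s 0) := by
  rw [veroneseDer, Derivation.smul_apply, pderiv_monomial, X_pow_eq_monomial, smul_eq_mul,
    monomial_mul, one_mul, add_comm]

theorem veroneseDer_mem {p : MvPolynomial (Fin 3) ℂ} (hp : p ∈ veronese3) :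
    veroneseDer p ∈ veronese3 := by
  rw [p.as_sum, map_sum]
  refine Subalgebra.sum_mem _ fun s hs => ?_
  rw [veroneseDer_monomial]
  by_cases hs0 : s 0 = 0
  · rw [hs0, Nat.cast_zero, mul_zero, monomial_zero]
    exact zero_mem _
  · apply monomial_mem_veronese3
    have hdeg := congrArg Finsupp.degree (Finsupp.sub_add_single_one_cancel hs0)
    have h3 := mem_veronese3_iff.mp hp s (mem_support_iff.mp hs)
    simp only [map_add, Finsupp.degree_single] at hdeg ⊢
    omega

theorem veroneseDer_iterate_eq_zero (p : MvPolynomial (Fin 3) ℂ) :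
    (⇑veroneseDer)^[totalDegree p + 1] p = 0 := by
  have hz : pderiv 0 ((X 2 : MvPolynomial (Fin 3) ℂ) ^ 4) = 0 := by
    rw [pderiv_pow, pderiv_X_of_ne (by decide), mul_zero]
  rw [veroneseDer, Derivation.smul_iterate_apply _ hz,
    pderiv_iterate_eq_zero_of_totalDegree_lt _ (Nat.lt_succ_self _), mul_zero]

theorem veroneseDer_X_zero_pow_three_ne_zero :
    veroneseDer ((X 0 : MvPolynomial (Fin 3) ℂ) ^ 3) ≠ 0 := by
  rw [X_pow_eq_monomial, veroneseDer_monomial, Ne, monomial_eq_zero]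
  norm_num

/-- case `d = 9` of Theorem 0.1. Let `A = ⊕_{k≥0} ℂ[x,y,z]_{3k}` be the
third Veronese subalgebra of `ℂ[x,y,z]`. Then `A` admits a nonzero locally nilpotent
ℂ-derivation: the derivation `z⁴·∂/∂x` of `ℂ[x,y,z]` is locally nilpotent, maps `A` into
itself, and restricts to a nonzero locally nilpotent derivation of `A`. -/
theorem veronese3_admits_nonzero_locally_nilpotent_derivation :
    (∀ a : MvPolynomial (Fin 3) ℂ, ∃ n : ℕ, (⇑veroneseDer)^[n] a = 0) ∧
    (∀ p ∈ veronese3, veroneseDer p ∈ veronese3) ∧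
    ∃ D : Derivation ℂ ↥veronese3 ↥veronese3,
      (∀ p : ↥veronese3, (D p : MvPolynomial (Fin 3) ℂ) = veroneseDer (p : MvPolynomial (Fin 3) ℂ)) ∧
      D ≠ 0 ∧
      ∀ a : ↥veronese3, ∃ n : ℕ, (⇑D)^[n] a = 0 := by
  have hx3 : (X 0 : MvPolynomial (Fin 3) ℂ) ^ 3 ∈ veronese3 := by
    rw [X_pow_eq_monomial]
    exact monomial_mem_veronese3 (by simp) 1
  refine ⟨fun a => ⟨_, veroneseDer_iterate_eq_zero a⟩, fun _ => veroneseDer_mem,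
    veroneseDer.restrict veronese3 fun _ => veroneseDer_mem, fun _ => rfl,
    Derivation.restrict_ne_zero hx3 veroneseDer_X_zero_pow_three_ne_zero, fun a => ?_⟩
  refine ⟨totalDegree (a : MvPolynomial (Fin 3) ℂ) + 1, Subtype.ext ?_⟩
  rw [Derivation.coe_restrict_iterate_apply, veroneseDer_iterate_eq_zero]
  rfl
end

section
/- Let a, b be integers with a ≥ 1 and a + 2b ≥ 0, let n ≥ 1, and let m₁,…,m_n be nonnegative integers with m_i ≤ a for all i. If Σ_{i=1}^n m_i² = 3a² + 4ab − 1 and Σ_{i=1}^n m_i = 3a + 2b − 3, then max_i m_i > a + b. -/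
open Finset

theorem Finset.sum_sq_le_mul_sum {ι R : Type*} [CommRing R] [LinearOrder R] [IsStrictOrderedRing R]
    (s : Finset ι) (m : ι → R) (c : R) (h0 : ∀ i ∈ s, 0 ≤ m i) (hc : ∀ i ∈ s, m i ≤ c) :
    ∑ i ∈ s, m i ^ 2 ≤ c * ∑ i ∈ s, m i := by
  rw [mul_sum]
  refine sum_le_sum fun i hi => ?_
  rw [sq]
  exact mul_le_mul_of_nonneg_right (hc i hi) (h0 i hi)

/-- For `b < 0` the bound needs `a + b ≥ 1`, which holds because `a + b ≥ -b`. -/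
theorem min_mul_lt_of_noether_fano (a b : ℤ) (ha : 1 ≤ a) (hab : 0 ≤ a + 2 * b) :
    min a (a + b) * (3 * a + 2 * b - 3) < 3 * a ^ 2 + 4 * a * b - 1 := by
  rcases le_or_gt 0 b with hb | hb
  · rw [min_eq_left (by omega)]
    nlinarith
  · rw [min_eq_right (by omega)]
    nlinarith [mul_nonpos_of_nonpos_of_nonneg hb.le hab]

theorem claim3_noether_fano_general (a b : ℤ) (ha : 1 ≤ a) (hab : 0 ≤ a + 2 * b)
    (n : ℕ)
    (m : Fin n → ℤ) (hm0 : ∀ i, 0 ≤ m i) (hma : ∀ i, m i ≤ a)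
    (h1 : ∑ i, (m i) ^ 2 = 3 * a ^ 2 + 4 * a * b - 1)
    (h2 : ∑ i, m i = 3 * a + 2 * b - 3) :
    ∃ i, a + b < m i := by
  by_contra! hc
  have hsum := sum_sq_le_mul_sum univ m (min a (a + b)) (fun i _ => hm0 i)
    (fun i _ => le_min (hma i) (hc i))
  rw [h1, h2] at hsum
  exact (min_mul_lt_of_noether_fano a b ha hab).not_ge hsum

/-- arithmetic content of Claim 3, the Noether–Fano inequality, in the
proof of Theorem 4.21. Let `a, b` be integers with `a ≥ 1` and `a + 2b ≥ 0`, let `n ≥ 1`,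
and let `m₁,…,m_n` be nonnegative integers with `m_i ≤ a` for all `i`. If
`Σ m_i² = 3a² + 4ab − 1` and `Σ m_i = 3a + 2b − 3`, then `max_i m_i > a + b`. -/
theorem claim3_noether_fano (a b : ℤ) (ha : 1 ≤ a) (hab : 0 ≤ a + 2 * b)
    (n : ℕ) (hn : 1 ≤ n)
    (m : Fin n → ℤ) (hm0 : ∀ i, 0 ≤ m i) (hma : ∀ i, m i ≤ a)
    (h1 : ∑ i, (m i) ^ 2 = 3 * a ^ 2 + 4 * a * b - 1)
    (h2 : ∑ i, m i = 3 * a + 2 * b - 3) :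
    ∃ i, a + b < m i :=
  claim3_noether_fano_general a b ha hab n m hm0 hma h1 h2
end
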